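/- arXiv:2507.19456 — 3 statements merged into one kernel-verified Lean document; each statement's English description precedes it below -/
import Mathlib

section
/- In the auxiliary hypergraph H = H1 ∪ H2 built from K_{n,n} (with t ≥ 2), every conflict with respect to H1 or with respect to H has size at least 3; that is, no matching of exactly two tiles of H is a conflict. -/
open Finset

/-- The vertex set of `K_{n,n}`: the disjoint union of the parts `X` and `Y`,
each a copy of `Fin n`. -/
abbrev Vtx (n : ℕ) := Fin n ⊕ Fin n

/-- The color set `N₁`, of size `⌈n/t⌉`. -/
abbrev Col1 (n t : ℕ) := Fin ((n + t - 1) / t)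

/-- The vertex set of the auxiliary hypergraph `H = H₁ ∪ H₂`: the set `U` of (2-element)
subsets of `X ∪ Y` (encoded as unordered pairs, i.e. `Sym2`; in particular it contains
the edge set of `K_{n,n}`), together with `V = ⋃_{i ∈ N₁} V_i` and `W = ⋃_{i ∈ N₂} W_i`,
where each `V_i` and each `W_i` is a copy of `X ∪ Y`; here `N₂` has `m` colors. -/
abbrev VH (n t m : ℕ) := Sym2 (Vtx n) ⊕ ((Col1 n t × Vtx n) ⊕ (Fin m × Vtx n))

/-- The combined color set `N₁ ∪ N₂`. -/
abbrev Col (n t m : ℕ) := Col1 n t ⊕ Fin m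

/-- The copy of the vertex `v` of `K_{n,n}` in `V_c` (if `c ∈ N₁`) or in `W_c`
(if `c ∈ N₂`). -/
def colVtx (n t m : ℕ) (c : Col n t m) (v : Vtx n) :
    (Col1 n t × Vtx n) ⊕ (Fin m × Vtx n) :=
  Sum.elim (fun i => Sum.inl (i, v)) (fun i => Sum.inr (i, v)) c

/-- The vertex set (as a subset of `V(H)`) of the `H₁`-tile `e_{S,i}`, where the copy `S`
of `K_{t+1,t+1} − (t+1)K₂` is described by injections `a b : Fin (t+1) → Fin n` listing
its vertices in `X` and in `Y` respectively, the removed perfect matching consisting of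
the pairs `(a j, b j)`. -/
def tileVerts1 (n t m : ℕ) (i : Col1 n t) (a b : Fin (t + 1) → Fin n) : Set (VH n t m) :=
  {v | (∃ j, v = Sum.inr (Sum.inl (i, Sum.inl (a j)))) ∨
       (∃ j, v = Sum.inr (Sum.inl (i, Sum.inr (b j)))) ∨
       (∃ j j', j ≠ j' ∧ v = Sum.inl s(Sum.inl (a j), Sum.inr (b j'))) ∨
       (∃ j j', j ≠ j' ∧ v = Sum.inl s(Sum.inl (a j), Sum.inl (a j'))) ∨
       (∃ j j', j ≠ j' ∧ v = Sum.inl s(Sum.inr (b j), Sum.inr (b j')))}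

/-- `T` is a tile of `H₁`. -/
def IsTile1 (n t m : ℕ) (T : Finset (VH n t m)) : Prop :=
  ∃ (i : Col1 n t) (a b : Fin (t + 1) → Fin n),
    Function.Injective a ∧ Function.Injective b ∧
      (T : Set (VH n t m)) = tileVerts1 n t m i a b

/-- The `H₂`-tile `e_{xy,i} = {xy, x^i, y^i}` for an edge `xy` of `K_{n,n}`
(`x ∈ X`, `y ∈ Y`) and a color `i ∈ N₂`. -/
def tile2 (n t m : ℕ) (x y : Fin n) (i : Fin m) : Finset (VH n t m) :=
  {Sum.inl s(Sum.inl x, Sum.inr y),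
   Sum.inr (Sum.inr (i, Sum.inl x)), Sum.inr (Sum.inr (i, Sum.inr y))}

/-- `T` is a tile of `H₂`. -/
def IsTile2 (n t m : ℕ) (T : Finset (VH n t m)) : Prop :=
  ∃ (x y : Fin n) (i : Fin m), T = tile2 n t m x y i

/-- `T` is a tile of `H = H₁ ∪ H₂`. -/
def IsTileH (n t m : ℕ) (T : Finset (VH n t m)) : Prop :=
  IsTile1 n t m T ∨ IsTile2 n t m T

/-- The colored edges of `K_{n,n}` corresponding to a tile `T`: pairs `((x,y), c)` such
that the edge `xy` (with `x ∈ X`, `y ∈ Y`) lies in `T` and `c ∈ N₁ ∪ N₂` is the color of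
`T`. -/
def coloredEdges (n t m : ℕ) (T : Finset (VH n t m)) :
    Set ((Fin n × Fin n) × Col n t m) :=
  {ec | Sum.inl s(Sum.inl ec.1.1, Sum.inr ec.1.2) ∈ T ∧
    ∃ v : Vtx n, Sum.inr (colVtx n t m ec.2 v) ∈ T}

/-- `E_F`: the set of colored edges of `K_{n,n}` corresponding to a set `F` of tiles. -/
def matchColoredEdges (n t m : ℕ) (F : Finset (Finset (VH n t m))) :
    Set ((Fin n × Fin n) × Col n t m) :=
  ⋃ T ∈ F, coloredEdges n t m T

/-- The edge set of the complete bipartite graph between `P` and `S`, where if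
`side = true` then `P ⊆ X` and `S ⊆ Y`, and if `side = false` then `S ⊆ X` and `P ⊆ Y`. -/
def copyEdges (n : ℕ) (side : Bool) (P S : Finset (Fin n)) : Finset (Fin n × Fin n) :=
  if side then P ×ˢ S else S ×ˢ P

/-- The copy of `K_{2,r}` with 2-side `P` (on the side indicated by `side`) and `r`-side
`S` (so `r = S.card`) is a *bad* copy with respect to the set `F` of colored edges: all of
its edges are colored by `F`, and no color appears on an odd number of its edges. -/
def IsBadCopy (n t m : ℕ) (F : Set ((Fin n × Fin n) × Col n t m)) (side : Bool)
    (P S : Finset (Fin n)) : Prop :=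
  P.card = 2 ∧ S.Nonempty ∧
    (∀ e ∈ copyEdges n side P S, ∃ c : Col n t m, (e, c) ∈ F) ∧
    ∀ c : Col n t m,
      Even {e : Fin n × Fin n | e ∈ copyEdges n side P S ∧ (e, c) ∈ F}.ncard

/-- A matching of tiles: a collection of pairwise disjoint tiles. -/
def IsMatching (n t m : ℕ) (tile : Finset (VH n t m) → Prop)
    (M : Finset (Finset (VH n t m))) : Prop :=
  (∀ T ∈ M, tile T) ∧ ∀ T ∈ M, ∀ T' ∈ M, T ≠ T' → Disjoint T T'

/-- A conflict with respect to the tile system `tile`: a matching `F` of at least two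
tiles such that `E_F` contains a bad copy `K` of `K_{2,r}` for some `r ≥ 1` using at least
one edge from each tile of `F`. -/
def IsConflictWrt (n t m : ℕ) (tile : Finset (VH n t m) → Prop)
    (F : Finset (Finset (VH n t m))) : Prop :=
  2 ≤ F.card ∧ IsMatching n t m tile F ∧
    ∃ (side : Bool) (P S : Finset (Fin n)),
      IsBadCopy n t m (matchColoredEdges n t m F) side P S ∧
      ∀ T ∈ F, ∃ e ∈ copyEdges n side P S, ∃ c : Col n t m,
        (e, c) ∈ coloredEdges n t m T


section Aux
variable {n t m : ℕ}

lemma mem_copy_tile1 {i : Col1 n t} {a b : Fin (t + 1) → Fin n} {c : Col n t m} {v : Vtx n} :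
    (Sum.inr (colVtx n t m c v) : VH n t m) ∈ tileVerts1 n t m i a b ↔
      (c = Sum.inl i ∧ ((∃ j, v = Sum.inl (a j)) ∨ ∃ j, v = Sum.inr (b j))) := by
  cases c with
  | inl i' =>
      simp only [tileVerts1, colVtx, Sum.elim_inl, Set.mem_setOf_eq, Sum.inr.injEq,
        Sum.inl.injEq, Prod.mk.injEq, reduceCtorEq, false_and, and_false, exists_false,
        exists_const, or_false, ne_eq]
      constructor
      · rintro ((⟨j, hi, hv⟩) | (⟨j, hi, hv⟩)) <;> subst hi <;>
          [exact ⟨rfl, Or.inl ⟨j, hv⟩⟩; exact ⟨rfl, Or.inr ⟨j, hv⟩⟩]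
      · rintro ⟨hi, (⟨j, hv⟩ | ⟨j, hv⟩)⟩
        exacts [Or.inl ⟨j, hi, hv⟩, Or.inr ⟨j, hi, hv⟩]
  | inr j' =>
      simp [tileVerts1, colVtx]

lemma mem_edge_tile1 {i : Col1 n t} {a b : Fin (t + 1) → Fin n} {x y : Fin n} :
    (Sum.inl s(Sum.inl x, Sum.inr y) : VH n t m) ∈ tileVerts1 n t m i a b ↔
      ∃ j j', j ≠ j' ∧ x = a j ∧ y = b j' := by
  simp only [tileVerts1, Set.mem_setOf_eq, reduceCtorEq, exists_false, false_or,
    Sum.inl.injEq, Sum.inr.injEq, ne_eq, Sym2.eq_iff, false_and, and_false, or_false,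
    exists_const]

lemma mem_colored_tile1 {T : Finset (VH n t m)} {i : Col1 n t} {a b : Fin (t + 1) → Fin n}
    (hT : (T : Set (VH n t m)) = tileVerts1 n t m i a b) {x y : Fin n} {c : Col n t m} :
    ((x, y), c) ∈ coloredEdges n t m T ↔
      c = Sum.inl i ∧ ∃ j j', j ≠ j' ∧ x = a j ∧ y = b j' := by
  have hmem : ∀ w : VH n t m, w ∈ T ↔ w ∈ tileVerts1 n t m i a b := by
    intro w; rw [← Finset.mem_coe, hT]
  constructor
  · rintro ⟨he, v, hv⟩
    rw [hmem] at he hv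
    exact ⟨(mem_copy_tile1.mp hv).1, mem_edge_tile1.mp he⟩
  · rintro ⟨hc, hj⟩
    refine ⟨(hmem _).mpr (mem_edge_tile1.mpr hj), Sum.inl (a 0), (hmem _).mpr ?_⟩
    exact mem_copy_tile1.mpr ⟨hc, Or.inl ⟨0, rfl⟩⟩

lemma mem_tile2 {x y x0 y0 : Fin n} {i : Fin m} {c : Col n t m} :
    (((x, y), c) ∈ coloredEdges n t m (tile2 n t m x0 y0 i)) ↔
      (x = x0 ∧ y = y0 ∧ c = Sum.inr i) := by
  constructor
  · rintro ⟨he, v, hv⟩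
    simp only [tile2, Finset.mem_insert, Finset.mem_singleton, Sum.inl.injEq,
      reduceCtorEq, or_false, Sym2.eq_iff, Sum.inr.injEq, false_and, and_false,
      or_false] at he
    have hc : c = Sum.inr i := by
      cases c with
      | inl i' => simp [tile2, colVtx] at hv
      | inr i' =>
          simp only [tile2, colVtx, Sum.elim_inr, Finset.mem_insert,
            Finset.mem_singleton, Sum.inr.injEq, reduceCtorEq, false_or,
            Prod.mk.injEq] at hv
          rcases hv with ⟨h, _⟩ | ⟨h, _⟩ <;> rw [h]
    exact ⟨he.1, he.2, hc⟩
  · rintro ⟨hx, hy, hc⟩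
    subst hx; subst hy; subst hc
    exact ⟨by simp [tile2], Sum.inl x, by simp [tile2, colVtx]⟩

lemma tileH_spec {T : Finset (VH n t m)} (hT : IsTileH n t m T) :
    ∃ c : Col n t m, ∀ x y c', ((x, y), c') ∈ coloredEdges n t m T →
      c' = c ∧ Sum.inr (colVtx n t m c (Sum.inl x)) ∈ T ∧
        Sum.inr (colVtx n t m c (Sum.inr y)) ∈ T := by
  rcases hT with ⟨i, a, b, ha, hb, hset⟩ | ⟨x0, y0, i, rfl⟩
  · refine ⟨Sum.inl i, fun x y c' h => ?_⟩
    obtain ⟨hc, j, j', hne, hx, hy⟩ := (mem_colored_tile1 hset).mp h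
    have hmem : ∀ w : VH n t m, w ∈ tileVerts1 n t m i a b → w ∈ T := by
      intro w hw; rw [← Finset.mem_coe, hset]; exact hw
    refine ⟨hc, hmem _ ?_, hmem _ ?_⟩
    · exact mem_copy_tile1.mpr ⟨rfl, Or.inl ⟨j, by rw [hx]⟩⟩
    · exact mem_copy_tile1.mpr ⟨rfl, Or.inr ⟨j', by rw [hy]⟩⟩
  · refine ⟨Sum.inr i, fun x y c' h => ?_⟩
    obtain ⟨hx, hy, hc⟩ := mem_tile2.mp h
    subst hx; subst hy
    exact ⟨hc, by simp [tile2, colVtx], by simp [tile2, colVtx]⟩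

lemma tileH_pairX {T : Finset (VH n t m)} (hT : IsTileH n t m T) {x x' : Fin n}
    (hxx : x ≠ x') {c : Col n t m}
    (h : Sum.inr (colVtx n t m c (Sum.inl x)) ∈ T)
    (h' : Sum.inr (colVtx n t m c (Sum.inl x')) ∈ T) :
    (Sum.inl s(Sum.inl x, Sum.inl x') : VH n t m) ∈ T := by
  rcases hT with ⟨i, a, b, ha, hb, hset⟩ | ⟨x0, y0, i, rfl⟩
  · have hmem : ∀ w : VH n t m, w ∈ T ↔ w ∈ tileVerts1 n t m i a b := by
      intro w; rw [← Finset.mem_coe, hset]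
    rw [hmem] at h h' ⊢
    obtain ⟨hc, hv⟩ := mem_copy_tile1.mp h
    obtain ⟨-, hv'⟩ := mem_copy_tile1.mp h'
    obtain ⟨j, hj⟩ : ∃ j, x = a j := by
      rcases hv with ⟨j, hj⟩ | ⟨j, hj⟩
      · exact ⟨j, Sum.inl.inj hj⟩
      · exact absurd hj (by simp)
    obtain ⟨j', hj'⟩ : ∃ j', x' = a j' := by
      rcases hv' with ⟨j2, hj2⟩ | ⟨j2, hj2⟩
      · exact ⟨j2, Sum.inl.inj hj2⟩
      · exact absurd hj2 (by simp)
    have hne : j ≠ j' := fun hjj => hxx (by rw [hj, hj', hjj])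
    exact Or.inr (Or.inr (Or.inr (Or.inl ⟨j, j', hne, by rw [hj, hj']⟩)))
  · exfalso
    cases c with
    | inl i' => simp [tile2, colVtx] at h
    | inr i' =>
        simp only [tile2, colVtx, Sum.elim_inr, Finset.mem_insert, Finset.mem_singleton,
          Sum.inr.injEq, reduceCtorEq, false_or, Prod.mk.injEq] at h h'
        rcases h with ⟨-, h⟩ | ⟨-, h⟩ <;> rcases h' with ⟨-, h'⟩ | ⟨-, h'⟩ <;>
          simp_all

lemma tileH_pairY {T : Finset (VH n t m)} (hT : IsTileH n t m T) {y y' : Fin n}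
    (hyy : y ≠ y') {c : Col n t m}
    (h : Sum.inr (colVtx n t m c (Sum.inr y)) ∈ T)
    (h' : Sum.inr (colVtx n t m c (Sum.inr y')) ∈ T) :
    (Sum.inl s(Sum.inr y, Sum.inr y') : VH n t m) ∈ T := by
  rcases hT with ⟨i, a, b, ha, hb, hset⟩ | ⟨x0, y0, i, rfl⟩
  · have hmem : ∀ w : VH n t m, w ∈ T ↔ w ∈ tileVerts1 n t m i a b := by
      intro w; rw [← Finset.mem_coe, hset]
    rw [hmem] at h h' ⊢
    obtain ⟨hc, hv⟩ := mem_copy_tile1.mp h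
    obtain ⟨-, hv'⟩ := mem_copy_tile1.mp h'
    obtain ⟨j, hj⟩ : ∃ j, y = b j := by
      rcases hv with ⟨j, hj⟩ | ⟨j, hj⟩
      · exact absurd hj (by simp)
      · exact ⟨j, Sum.inr.inj hj⟩
    obtain ⟨j', hj'⟩ : ∃ j', y' = b j' := by
      rcases hv' with ⟨j2, hj2⟩ | ⟨j2, hj2⟩
      · exact absurd hj2 (by simp)
      · exact ⟨j2, Sum.inr.inj hj2⟩
    have hne : j ≠ j' := fun hjj => hyy (by rw [hj, hj', hjj])
    exact Or.inr (Or.inr (Or.inr (Or.inr ⟨j, j', hne, by rw [hj, hj']⟩)))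
  · exfalso
    cases c with
    | inl i' => simp [tile2, colVtx] at h
    | inr i' =>
        simp only [tile2, colVtx, Sum.elim_inr, Finset.mem_insert, Finset.mem_singleton,
          Sum.inr.injEq, reduceCtorEq, false_or, Prod.mk.injEq] at h h'
        rcases h with ⟨-, h⟩ | ⟨-, h⟩ <;> rcases h' with ⟨-, h'⟩ | ⟨-, h'⟩ <;>
          simp_all

lemma missing_aux {α β : Type*} {inT inT' : α → β → Prop} {Xp : α → Prop}
    {Xs Ys : β → Prop} {SS : β → Prop} {u u' : α}
    (cover : ∀ s, SS s → inT u s ∨ inT' u s)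
    (endT : ∀ p s, inT p s → Xp p ∧ Xs s)
    (endT' : ∀ p s, inT' p s → Ys s)
    (clash : ∀ s s', s ≠ s' → Xs s → Xs s' → Ys s → Ys s' → False)
    (hnotu : ¬ Xp u)
    (h2 : ∃ p s p' s', (p = u ∨ p = u') ∧ (p' = u ∨ p' = u') ∧ SS s ∧ SS s' ∧
      (p, s) ≠ (p', s') ∧ inT p s ∧ inT p' s') : False := by
  obtain ⟨p, s, p', s', hp, hp', hSs, hSs', hne, h1, h1'⟩ := h2
  have hpu : p = u' := by
    rcases hp with rfl | rfl
    · exact absurd (endT _ _ h1).1 hnotu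
    · rfl
  have hpu' : p' = u' := by
    rcases hp' with rfl | rfl
    · exact absurd (endT _ _ h1').1 hnotu
    · rfl
  subst hpu; subst hpu'
  have hss : s ≠ s' := fun h => hne (by rw [h])
  have hXs : Xs s := (endT _ _ h1).2
  have hXs' : Xs s' := (endT _ _ h1').2
  have hYs : Ys s := by
    rcases cover s hSs with h | h
    · exact absurd (endT _ _ h).1 hnotu
    · exact endT' _ _ h
  have hYs' : Ys s' := by
    rcases cover s' hSs' with h | h
    · exact absurd (endT _ _ h).1 hnotu
    · exact endT' _ _ h
  exact clash s s' hss hXs hXs' hYs hYs'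

lemma conflict_combinat {α β : Type*} {inT1 inT2 : α → β → Prop} {Ap Bp : α → Prop}
    {As Bs : β → Prop} {SS : β → Prop} {u1 u2 : α} (hu : u1 ≠ u2)
    (cover : ∀ p, (p = u1 ∨ p = u2) → ∀ s, SS s → inT1 p s ∨ inT2 p s)
    (end1 : ∀ p s, inT1 p s → Ap p ∧ As s)
    (end2 : ∀ p s, inT2 p s → Bp p ∧ Bs s)
    (clashP : Ap u1 → Ap u2 → Bp u1 → Bp u2 → False)
    (clashS : ∀ s s', s ≠ s' → As s → As s' → Bs s → Bs s' → False)
    (h1 : ∃ p s p' s', (p = u1 ∨ p = u2) ∧ (p' = u1 ∨ p' = u2) ∧ SS s ∧ SS s' ∧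
      (p, s) ≠ (p', s') ∧ inT1 p s ∧ inT1 p' s')
    (h2 : ∃ p s p' s', (p = u1 ∨ p = u2) ∧ (p' = u1 ∨ p' = u2) ∧ SS s ∧ SS s' ∧
      (p, s) ≠ (p', s') ∧ inT2 p s ∧ inT2 p' s') : False := by
  have h1' : ∃ p s p' s', (p = u2 ∨ p = u1) ∧ (p' = u2 ∨ p' = u1) ∧ SS s ∧ SS s' ∧
      (p, s) ≠ (p', s') ∧ inT1 p s ∧ inT1 p' s' := by
    obtain ⟨p, ss, p', s', a, b, c, d, e, f, g⟩ := h1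
    exact ⟨p, ss, p', s', a.symm, b.symm, c, d, e, f, g⟩
  have h2' : ∃ p s p' s', (p = u2 ∨ p = u1) ∧ (p' = u2 ∨ p' = u1) ∧ SS s ∧ SS s' ∧
      (p, s) ≠ (p', s') ∧ inT2 p s ∧ inT2 p' s' := by
    obtain ⟨p, ss, p', s', a, b, c, d, e, f, g⟩ := h2
    exact ⟨p, ss, p', s', a.symm, b.symm, c, d, e, f, g⟩
  by_cases hA1 : Ap u1
  · by_cases hA2 : Ap u2
    · by_cases hB1 : Bp u1
      · by_cases hB2 : Bp u2
        · exact clashP hA1 hA2 hB1 hB2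
        · exact missing_aux (inT := inT2) (inT' := inT1)
            (fun s hs => (cover u2 (Or.inr rfl) s hs).symm)
            end2 (fun p s h => (end1 p s h).2)
            (fun s s' hss a b c d => clashS s s' hss c d a b) hB2 h2'
      · exact missing_aux (inT := inT2) (inT' := inT1)
          (fun s hs => (cover u1 (Or.inl rfl) s hs).symm)
          end2 (fun p s h => (end1 p s h).2)
          (fun s s' hss a b c d => clashS s s' hss c d a b) hB1 h2
    · exact missing_aux (inT := inT1) (inT' := inT2)
        (fun s hs => cover u2 (Or.inr rfl) s hs)
        end1 (fun p s h => (end2 p s h).2) clashS hA2 h1'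
  · exact missing_aux (inT := inT1) (inT' := inT2)
      (fun s hs => cover u1 (Or.inl rfl) s hs)
      end1 (fun p s h => (end2 p s h).2) clashS hA1 h1

end Aux
lemma stmt9_aux {n t m : ℕ} (C : Finset (Finset (VH n t m)))
    (hC : IsConflictWrt n t m (IsTile1 n t m) C ∨ IsConflictWrt n t m (IsTileH n t m) C) :
    3 ≤ C.card := by
  classical
  have hC' : 2 ≤ C.card ∧ (∀ T ∈ C, IsTileH n t m T) ∧
      (∀ T ∈ C, ∀ T' ∈ C, T ≠ T' → Disjoint T T') ∧
      ∃ side P S, IsBadCopy n t m (matchColoredEdges n t m C) side P S ∧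
        ∀ T ∈ C, ∃ e ∈ copyEdges n side P S, ∃ c, (e, c) ∈ coloredEdges n t m T := by
    rcases hC with ⟨h2, ⟨ht1, hd⟩, rest⟩ | ⟨h2, ⟨ht1, hd⟩, rest⟩
    · exact ⟨h2, fun T hT => Or.inl (ht1 T hT), hd, rest⟩
    · exact ⟨h2, ht1, hd, rest⟩
  obtain ⟨h2, htile, hdis, side, P, S, hbad, huse⟩ := hC'
  by_contra hlt
  push_neg at hlt
  have hcard : C.card = 2 := le_antisymm (by omega) h2
  obtain ⟨T1, T2, hT12, rfl⟩ := Finset.card_eq_two.mp hcard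
  have hmem1 : T1 ∈ ({T1, T2} : Finset (Finset (VH n t m))) := by simp
  have hmem2 : T2 ∈ ({T1, T2} : Finset (Finset (VH n t m))) := by simp
  have hdisj : Disjoint T1 T2 := hdis T1 hmem1 T2 hmem2 hT12
  obtain ⟨c1, spec1⟩ := tileH_spec (htile T1 hmem1)
  obtain ⟨c2, spec2⟩ := tileH_spec (htile T2 hmem2)
  obtain ⟨hP2, hSne, hcover, heven⟩ := hbad
  obtain ⟨u1, u2, hu, hPeq⟩ := Finset.card_eq_two.mp hP2
  have hEF : ∀ ec : (Fin n × Fin n) × Col n t m,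
      ec ∈ matchColoredEdges n t m {T1, T2} ↔
        ec ∈ coloredEdges n t m T1 ∨ ec ∈ coloredEdges n t m T2 := by
    intro ec; simp [matchColoredEdges]
  set pe : Fin n → Fin n → Fin n × Fin n :=
    fun p s => if side then (p, s) else (s, p) with hpe
  set pv : Fin n → Vtx n := fun p => if side then Sum.inl p else Sum.inr p with hpv
  set sv : Fin n → Vtx n := fun s => if side then Sum.inr s else Sum.inl s with hsv
  have hpe_mem : ∀ p s, p ∈ P → s ∈ S → pe p s ∈ copyEdges n side P S := by
    intro p s hp hs
    cases side <;> simp [copyEdges, hpe, Finset.mem_product, hp, hs]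
  have hdecode : ∀ e ∈ copyEdges n side P S, ∃ p, p ∈ P ∧ ∃ s, s ∈ S ∧ e = pe p s := by
    intro e he
    cases side <;> simp only [copyEdges, if_true, if_false, Bool.false_eq_true,
      Finset.mem_product] at he <;> simp only [hpe]
    · exact ⟨e.2, he.2, e.1, he.1, by simp⟩
    · exact ⟨e.1, he.1, e.2, he.2, by simp⟩
  have hend : ∀ (T : Finset (VH n t m)) (c : Col n t m),
      (∀ x y c', ((x, y), c') ∈ coloredEdges n t m T →
        c' = c ∧ Sum.inr (colVtx n t m c (Sum.inl x)) ∈ T ∧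
          Sum.inr (colVtx n t m c (Sum.inr y)) ∈ T) →
      ∀ p s c', (pe p s, c') ∈ coloredEdges n t m T →
        c' = c ∧ Sum.inr (colVtx n t m c (pv p)) ∈ T ∧
          Sum.inr (colVtx n t m c (sv s)) ∈ T := by
    intro T c spec p s c' h
    cases side
    · simp only [hpe, hpv, hsv, Bool.false_eq_true, if_false] at h ⊢
      obtain ⟨hc, hx, hy⟩ := spec s p c' h
      exact ⟨hc, hy, hx⟩
    · simp only [hpe, hpv, hsv, if_true] at h ⊢
      obtain ⟨hc, hx, hy⟩ := spec p s c' h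
      exact ⟨hc, hx, hy⟩
  have end1 : ∀ p s, (pe p s, c1) ∈ coloredEdges n t m T1 →
      Sum.inr (colVtx n t m c1 (pv p)) ∈ T1 ∧ Sum.inr (colVtx n t m c1 (sv s)) ∈ T1 :=
    fun p s h => (hend T1 c1 spec1 p s c1 h).2
  have end2 : ∀ p s, (pe p s, c2) ∈ coloredEdges n t m T2 →
      Sum.inr (colVtx n t m c2 (pv p)) ∈ T2 ∧ Sum.inr (colVtx n t m c2 (sv s)) ∈ T2 :=
    fun p s h => (hend T2 c2 spec2 p s c2 h).2
  have hmemP : ∀ p, (p = u1 ∨ p = u2) → p ∈ P := by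
    intro p hp; rw [hPeq]; simpa using hp
  have hPuu : ∀ p, p ∈ P → p = u1 ∨ p = u2 := by
    intro p hp; rw [hPeq] at hp; simpa using hp
  have cover : ∀ p, (p = u1 ∨ p = u2) → ∀ s, s ∈ S →
      (pe p s, c1) ∈ coloredEdges n t m T1 ∨ (pe p s, c2) ∈ coloredEdges n t m T2 := by
    intro p hp s hs
    obtain ⟨c, hc⟩ := hcover (pe p s) (hpe_mem p s (hmemP p hp) hs)
    rcases (hEF _).mp hc with h | h
    · exact Or.inl (by rwa [(hend T1 c1 spec1 p s c h).1] at h)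
    · exact Or.inr (by rwa [(hend T2 c2 spec2 p s c h).1] at h)
  by_cases hc12 : c1 = c2
  · -- Case A: the two tiles have the same color
    have hvclash : ∀ v : Vtx n, Sum.inr (colVtx n t m c1 v) ∈ T1 →
        Sum.inr (colVtx n t m c2 v) ∈ T2 → False := by
      intro v hv1 hv2
      rw [hc12] at hv1
      exact Finset.disjoint_left.mp hdisj hv1 hv2
    have getA : ∀ p s, (p = u1 ∨ p = u2) → s ∈ S →
        (pe p s, c1) ∈ coloredEdges n t m T1 → Sum.inr (colVtx n t m c1 (pv u1)) ∈ T1 := by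
      intro p s hp hs h
      have hAs := (end1 p s h).2
      rcases hp with rfl | rfl
      · exact (end1 p s h).1
      · rcases cover u1 (Or.inl rfl) s hs with h' | h'
        · exact (end1 _ _ h').1
        · exact ((hvclash _ hAs (end2 _ _ h').2)).elim
    have getB : ∀ p s, (p = u1 ∨ p = u2) → s ∈ S →
        (pe p s, c2) ∈ coloredEdges n t m T2 → Sum.inr (colVtx n t m c2 (pv u1)) ∈ T2 := by
      intro p s hp hs h
      have hBs := (end2 p s h).2
      rcases hp with rfl | rfl
      · exact (end2 p s h).1
      · rcases cover u1 (Or.inl rfl) s hs with h' | h'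
        · exact ((hvclash _ (end1 _ _ h').2 hBs)).elim
        · exact (end2 _ _ h').1
    obtain ⟨e1, he1, ca, hca⟩ := huse T1 hmem1
    obtain ⟨p, hp, s, hs, rfl⟩ := hdecode e1 he1
    have h1 : (pe p s, c1) ∈ coloredEdges n t m T1 := by
      rwa [(hend T1 c1 spec1 p s ca hca).1] at hca
    obtain ⟨e2, he2, cb, hcb⟩ := huse T2 hmem2
    obtain ⟨p', hp', s', hs', rfl⟩ := hdecode e2 he2
    have h2' : (pe p' s', c2) ∈ coloredEdges n t m T2 := by
      rwa [(hend T2 c2 spec2 p' s' cb hcb).1] at hcb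
    exact hvclash _ (getA p s (hPuu p hp) hs h1) (getB p' s' (hPuu p' hp') hs' h2')
  · -- Case B: the two tiles have different colors
    have twoEdges1 : ∃ p s p' s', (p = u1 ∨ p = u2) ∧ (p' = u1 ∨ p' = u2) ∧
        s ∈ S ∧ s' ∈ S ∧ (p, s) ≠ (p', s') ∧
        (pe p s, c1) ∈ coloredEdges n t m T1 ∧ (pe p' s', c1) ∈ coloredEdges n t m T1 := by
      obtain ⟨e1, he1, ca, hca⟩ := huse T1 hmem1
      obtain ⟨p, hp, s, hs, rfl⟩ := hdecode e1 he1
      have h1 : (pe p s, c1) ∈ coloredEdges n t m T1 := by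
        rwa [(hend T1 c1 spec1 p s ca hca).1] at hca
      have hK1 : Even {e : Fin n × Fin n | e ∈ copyEdges n side P S ∧
          (e, c1) ∈ matchColoredEdges n t m {T1, T2}}.ncard := heven c1
      have hmemK : pe p s ∈ {e : Fin n × Fin n | e ∈ copyEdges n side P S ∧
          (e, c1) ∈ matchColoredEdges n t m {T1, T2}} := ⟨he1, (hEF _).mpr (Or.inl h1)⟩
      have hlt1 : 1 < {e : Fin n × Fin n | e ∈ copyEdges n side P S ∧
          (e, c1) ∈ matchColoredEdges n t m {T1, T2}}.ncard := by
        have hne0 : {e : Fin n × Fin n | e ∈ copyEdges n side P S ∧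
            (e, c1) ∈ matchColoredEdges n t m {T1, T2}}.ncard ≠ 0 := by
          rw [Ne, Set.ncard_eq_zero (Set.toFinite _)]
          exact fun hemp => by rw [hemp] at hmemK; exact hmemK
        obtain ⟨r, hr⟩ := hK1
        omega
      obtain ⟨f, hfK, hfne⟩ := Set.exists_ne_of_one_lt_ncard hlt1 (pe p s)
      obtain ⟨p', hp', s', hs', rfl⟩ := hdecode f hfK.1
      have hf1 : (pe p' s', c1) ∈ coloredEdges n t m T1 := by
        rcases (hEF _).mp hfK.2 with h | h
        · exact h
        · exact absurd (hend T2 c2 spec2 p' s' c1 h).1 hc12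
      refine ⟨p, s, p', s', hPuu p hp, hPuu p' hp', hs, hs', ?_, h1, hf1⟩
      intro hq
      exact hfne (congrArg (fun q : Fin n × Fin n => pe q.1 q.2) hq.symm)
    have twoEdges2 : ∃ p s p' s', (p = u1 ∨ p = u2) ∧ (p' = u1 ∨ p' = u2) ∧
        s ∈ S ∧ s' ∈ S ∧ (p, s) ≠ (p', s') ∧
        (pe p s, c2) ∈ coloredEdges n t m T2 ∧ (pe p' s', c2) ∈ coloredEdges n t m T2 := by
      obtain ⟨e2, he2, cb, hcb⟩ := huse T2 hmem2
      obtain ⟨p, hp, s, hs, rfl⟩ := hdecode e2 he2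
      have h1 : (pe p s, c2) ∈ coloredEdges n t m T2 := by
        rwa [(hend T2 c2 spec2 p s cb hcb).1] at hcb
      have hK1 : Even {e : Fin n × Fin n | e ∈ copyEdges n side P S ∧
          (e, c2) ∈ matchColoredEdges n t m {T1, T2}}.ncard := heven c2
      have hmemK : pe p s ∈ {e : Fin n × Fin n | e ∈ copyEdges n side P S ∧
          (e, c2) ∈ matchColoredEdges n t m {T1, T2}} := ⟨he2, (hEF _).mpr (Or.inr h1)⟩
      have hlt1 : 1 < {e : Fin n × Fin n | e ∈ copyEdges n side P S ∧
          (e, c2) ∈ matchColoredEdges n t m {T1, T2}}.ncard := by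
        have hne0 : {e : Fin n × Fin n | e ∈ copyEdges n side P S ∧
            (e, c2) ∈ matchColoredEdges n t m {T1, T2}}.ncard ≠ 0 := by
          rw [Ne, Set.ncard_eq_zero (Set.toFinite _)]
          exact fun hemp => by rw [hemp] at hmemK; exact hmemK
        obtain ⟨r, hr⟩ := hK1
        omega
      obtain ⟨f, hfK, hfne⟩ := Set.exists_ne_of_one_lt_ncard hlt1 (pe p s)
      obtain ⟨p', hp', s', hs', rfl⟩ := hdecode f hfK.1
      have hf1 : (pe p' s', c2) ∈ coloredEdges n t m T2 := by
        rcases (hEF _).mp hfK.2 with h | h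
        · exact absurd (hend T1 c1 spec1 p' s' c2 h).1 (fun hh => hc12 hh.symm)
        · exact h
      refine ⟨p, s, p', s', hPuu p hp, hPuu p' hp', hs, hs', ?_, h1, hf1⟩
      intro hq
      exact hfne (congrArg (fun q : Fin n × Fin n => pe q.1 q.2) hq.symm)
    have clashP : Sum.inr (colVtx n t m c1 (pv u1)) ∈ T1 →
        Sum.inr (colVtx n t m c1 (pv u2)) ∈ T1 →
        Sum.inr (colVtx n t m c2 (pv u1)) ∈ T2 →
        Sum.inr (colVtx n t m c2 (pv u2)) ∈ T2 → False := by
      intro a1 a2 b1 b2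
      have hel1 : (Sum.inl s(pv u1, pv u2) : VH n t m) ∈ T1 := by
        cases side
        · simp only [hpv, Bool.false_eq_true, if_false] at a1 a2 ⊢
          exact tileH_pairY (htile T1 hmem1) hu a1 a2
        · simp only [hpv, if_true] at a1 a2 ⊢
          exact tileH_pairX (htile T1 hmem1) hu a1 a2
      have hel2 : (Sum.inl s(pv u1, pv u2) : VH n t m) ∈ T2 := by
        cases side
        · simp only [hpv, Bool.false_eq_true, if_false] at b1 b2 ⊢
          exact tileH_pairY (htile T2 hmem2) hu b1 b2
        · simp only [hpv, if_true] at b1 b2 ⊢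
          exact tileH_pairX (htile T2 hmem2) hu b1 b2
      exact Finset.disjoint_left.mp hdisj hel1 hel2
    have clashS : ∀ s s', s ≠ s' →
        Sum.inr (colVtx n t m c1 (sv s)) ∈ T1 →
        Sum.inr (colVtx n t m c1 (sv s')) ∈ T1 →
        Sum.inr (colVtx n t m c2 (sv s)) ∈ T2 →
        Sum.inr (colVtx n t m c2 (sv s')) ∈ T2 → False := by
      intro s s' hss a1 a2 b1 b2
      have hel1 : (Sum.inl s(sv s, sv s') : VH n t m) ∈ T1 := by
        cases side
        · simp only [hsv, Bool.false_eq_true, if_false] at a1 a2 ⊢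
          exact tileH_pairX (htile T1 hmem1) hss a1 a2
        · simp only [hsv, if_true] at a1 a2 ⊢
          exact tileH_pairY (htile T1 hmem1) hss a1 a2
      have hel2 : (Sum.inl s(sv s, sv s') : VH n t m) ∈ T2 := by
        cases side
        · simp only [hsv, Bool.false_eq_true, if_false] at b1 b2 ⊢
          exact tileH_pairX (htile T2 hmem2) hss b1 b2
        · simp only [hsv, if_true] at b1 b2 ⊢
          exact tileH_pairY (htile T2 hmem2) hss b1 b2
      exact Finset.disjoint_left.mp hdisj hel1 hel2
    exact conflict_combinat hu cover end1 end2 clashP clashS twoEdges1 twoEdges2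

/-- In the auxiliary hypergraph `H = H₁ ∪ H₂` built from `K_{n,n}` (with `t ≥ 2` and
`N₂` of size `⌈n^δ⌉` for a fixed `δ ∈ (0,1)`), every conflict with respect to `H₁` or
with respect to `H` has size at least 3. -/
theorem stmt9 (t n : ℕ) (ht : 2 ≤ t) (hn : 1 ≤ n) (δ : ℝ) (hδ0 : 0 < δ) (hδ1 : δ < 1)
    (C : Finset (Finset (VH n t ⌈(n : ℝ) ^ δ⌉₊)))
    (hC : IsConflictWrt n t ⌈(n : ℝ) ^ δ⌉₊ (IsTile1 n t ⌈(n : ℝ) ^ δ⌉₊) C ∨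
          IsConflictWrt n t ⌈(n : ℝ) ^ δ⌉₊ (IsTileH n t ⌈(n : ℝ) ^ δ⌉₊) C) :
    3 ≤ C.card :=
  stmt9_aux C hC
end

section
/- In the auxiliary hypergraph H = H1 ∪ H2 built from K_{n,n} (with t ≥ 2), every conflict (with respect to H or with respect to H1) contains a subset belonging to 𝒞 ∪ 𝒟, where 𝒞 is the set of all inclusion-minimal irreducible conflicts in H1 and 𝒟 is the set of all inclusion-minimal irreducible conflicts in H. -/
open Finset

/-- The bad copy of `K_{2,r}` with 2-side `P` and `r`-side `S` is *reducible* with respect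
to `F`: its edges can be partitioned into `m' ≥ 2` bad copies of `K_{2,r_1}, …, K_{2,r_{m'}}`
(with each `r_u < r`), all having the same vertex side of size 2 as the copy;
equivalently, `S` can be partitioned into `m' ≥ 2` nonempty sets `S_u` with each
`(P, S_u)` a bad copy. -/
def IsReducible (n t m : ℕ) (F : Set ((Fin n × Fin n) × Col n t m)) (side : Bool)
    (P S : Finset (Fin n)) : Prop :=
  ∃ m' : ℕ, 2 ≤ m' ∧ ∃ Sp : Fin m' → Finset (Fin n),
    (∀ u, (Sp u).Nonempty) ∧ (∀ u, (Sp u).card < S.card) ∧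
    (∀ u v, u ≠ v → Disjoint (Sp u) (Sp v)) ∧
    Finset.univ.biUnion Sp = S ∧
    ∀ u, IsBadCopy n t m F side P (Sp u)

/-- An irreducible conflict with respect to the tile system `tile`: a matching `F` of at
least two tiles such that `E_F` contains an irreducible bad copy of some `K_{2,r}` using
at least one edge from each tile of `F`. -/
def IsIrredConflictWrt (n t m : ℕ) (tile : Finset (VH n t m) → Prop)
    (F : Finset (Finset (VH n t m))) : Prop :=
  2 ≤ F.card ∧ IsMatching n t m tile F ∧
    ∃ (side : Bool) (P S : Finset (Fin n)),
      IsBadCopy n t m (matchColoredEdges n t m F) side P S ∧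
      ¬ IsReducible n t m (matchColoredEdges n t m F) side P S ∧
      ∀ T ∈ F, ∃ e ∈ copyEdges n side P S, ∃ c : Col n t m,
        (e, c) ∈ coloredEdges n t m T

/-- `𝒞`: the set of all inclusion-minimal irreducible conflicts in `H₁`. -/
def minIrredConflicts1 (n t m : ℕ) : Set (Finset (Finset (VH n t m))) :=
  {C | IsIrredConflictWrt n t m (IsTile1 n t m) C ∧
    ∀ C' : Finset (Finset (VH n t m)), C' ⊂ C →
      ¬ IsIrredConflictWrt n t m (IsTile1 n t m) C'}

/-- `𝒟`: the set of all inclusion-minimal irreducible conflicts in `H = H₁ ∪ H₂`. -/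
def minIrredConflictsH (n t m : ℕ) : Set (Finset (Finset (VH n t m))) :=
  {C | IsIrredConflictWrt n t m (IsTileH n t m) C ∧
    ∀ C' : Finset (Finset (VH n t m)), C' ⊂ C →
      ¬ IsIrredConflictWrt n t m (IsTileH n t m) C'}

/- ---------------- Auxiliary lemmas ---------------- -/

/-- Every set with a property contains an inclusion-minimal subset with that property. -/
lemma exists_min_subset {α : Type*} [DecidableEq α] (P : Finset α → Prop) (F : Finset α)
    (h : P F) : ∃ F' ⊆ F, P F' ∧ ∀ G, G ⊂ F' → ¬ P G := by
  classical
  have hne : (F.powerset.filter P).Nonempty := ⟨F, by simp [h]⟩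
  obtain ⟨G, hG, hmin⟩ := Finset.exists_min_image _ Finset.card hne
  simp only [Finset.mem_filter, Finset.mem_powerset] at hG
  refine ⟨G, hG.1, hG.2, fun G' hG' hPG' => ?_⟩
  have hle : G.card ≤ G'.card := hmin G'
    (by simp [Finset.mem_filter, Finset.mem_powerset, hPG', hG'.subset.trans hG.1])
  exact absurd hle (by simpa using Finset.card_lt_card hG')

lemma mem_matchColoredEdges {n t m : ℕ} {F : Finset (Finset (VH n t m))}
    {ec : (Fin n × Fin n) × Col n t m} :
    ec ∈ matchColoredEdges n t m F ↔ ∃ T ∈ F, ec ∈ coloredEdges n t m T := by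
  simp [matchColoredEdges]

/-- If a tile of `H` contains the two cross edges `p₁s`, `p₂s` with `p₁ ≠ p₂` in `X`,
then it contains the pair `{p₁, p₂}`. -/
lemma pair_mem_true {n t m : ℕ} {T : Finset (VH n t m)} (hT : IsTileH n t m T)
    {p1 p2 s : Fin n} (hp : p1 ≠ p2)
    (h1 : (Sum.inl s(Sum.inl p1, Sum.inr s) : VH n t m) ∈ T)
    (h2 : (Sum.inl s(Sum.inl p2, Sum.inr s) : VH n t m) ∈ T) :
    (Sum.inl s(Sum.inl p1, Sum.inl p2) : VH n t m) ∈ T := by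
  rcases hT with ⟨i, a, b, ha, hb, hset⟩ | ⟨x, y, i, rfl⟩
  · have h1' : (Sum.inl s(Sum.inl p1, Sum.inr s) : VH n t m) ∈ tileVerts1 n t m i a b :=
      hset ▸ Finset.mem_coe.mpr h1
    have h2' : (Sum.inl s(Sum.inl p2, Sum.inr s) : VH n t m) ∈ tileVerts1 n t m i a b :=
      hset ▸ Finset.mem_coe.mpr h2
    simp only [tileVerts1, Set.mem_setOf_eq, Sum.inl.injEq, Sum.inr.injEq, Sym2.eq_iff] at h1' h2'
    obtain ⟨j1, j1', hj1, hp1, -⟩ :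
        ∃ j j', j ≠ j' ∧ p1 = a j ∧ s = b j' := by
      rcases h1' with ⟨j, hj⟩ | ⟨j, hj⟩ | ⟨j, j', hjj, hj⟩ | ⟨j, j', hjj, hj⟩ | ⟨j, j', hjj, hj⟩
      · simp at hj
      · simp at hj
      · rcases hj with ⟨hj1, hj2⟩ | ⟨hj1, hj2⟩
        · exact ⟨j, j', hjj, hj1, hj2⟩
        · simp at hj1
      · rcases hj with ⟨hj1, hj2⟩ | ⟨hj1, hj2⟩ <;> simp at hj2
      · rcases hj with ⟨hj1, hj2⟩ | ⟨hj1, hj2⟩ <;> simp at hj1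
    obtain ⟨j2, j2', hj2, hp2, -⟩ :
        ∃ j j', j ≠ j' ∧ p2 = a j ∧ s = b j' := by
      rcases h2' with ⟨j, hj⟩ | ⟨j, hj⟩ | ⟨j, j', hjj, hj⟩ | ⟨j, j', hjj, hj⟩ | ⟨j, j', hjj, hj⟩
      · simp at hj
      · simp at hj
      · rcases hj with ⟨hj1, hj2⟩ | ⟨hj1, hj2⟩
        · exact ⟨j, j', hjj, hj1, hj2⟩
        · simp at hj1
      · rcases hj with ⟨hj1, hj2⟩ | ⟨hj1, hj2⟩ <;> simp at hj2
      · rcases hj with ⟨hj1, hj2⟩ | ⟨hj1, hj2⟩ <;> simp at hj1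
    have hjne : j1 ≠ j2 := fun h => hp (by rw [hp1, hp2, h])
    have hmem : (Sum.inl s(Sum.inl p1, Sum.inl p2) : VH n t m) ∈ tileVerts1 n t m i a b := by
      refine Or.inr (Or.inr (Or.inr (Or.inl ⟨j1, j2, hjne, ?_⟩)))
      rw [hp1, hp2]
    exact Finset.mem_coe.mp (hset ▸ hmem)
  · exfalso
    simp only [tile2, Finset.mem_insert, Finset.mem_singleton, Sum.inl.injEq,
      Sym2.eq_iff] at h1 h2
    rcases h1 with (⟨hx, -⟩ | ⟨hx, -⟩) | h1 | h1
    · rcases h2 with (⟨hx', -⟩ | ⟨hx', -⟩) | h2 | h2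
      · exact hp (hx.trans hx'.symm)
      · simp at hx'
      · simp at h2
      · simp at h2
    · simp at hx
    · simp at h1
    · simp at h1

/-- If a tile of `H` contains the two cross edges `sp₁`, `sp₂` with `p₁ ≠ p₂` in `Y`,
then it contains the pair `{p₁, p₂}`. -/
lemma pair_mem_false {n t m : ℕ} {T : Finset (VH n t m)} (hT : IsTileH n t m T)
    {p1 p2 s : Fin n} (hp : p1 ≠ p2)
    (h1 : (Sum.inl s(Sum.inl s, Sum.inr p1) : VH n t m) ∈ T)
    (h2 : (Sum.inl s(Sum.inl s, Sum.inr p2) : VH n t m) ∈ T) :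
    (Sum.inl s(Sum.inr p1, Sum.inr p2) : VH n t m) ∈ T := by
  rcases hT with ⟨i, a, b, ha, hb, hset⟩ | ⟨x, y, i, rfl⟩
  · have h1' : (Sum.inl s(Sum.inl s, Sum.inr p1) : VH n t m) ∈ tileVerts1 n t m i a b :=
      hset ▸ Finset.mem_coe.mpr h1
    have h2' : (Sum.inl s(Sum.inl s, Sum.inr p2) : VH n t m) ∈ tileVerts1 n t m i a b :=
      hset ▸ Finset.mem_coe.mpr h2
    simp only [tileVerts1, Set.mem_setOf_eq, Sum.inl.injEq, Sum.inr.injEq, Sym2.eq_iff] at h1' h2'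
    obtain ⟨j1, j1', hj1, hs1, hp1⟩ :
        ∃ j j', j ≠ j' ∧ s = a j ∧ p1 = b j' := by
      rcases h1' with ⟨j, hj⟩ | ⟨j, hj⟩ | ⟨j, j', hjj, hj⟩ | ⟨j, j', hjj, hj⟩ | ⟨j, j', hjj, hj⟩
      · simp at hj
      · simp at hj
      · rcases hj with ⟨hj1, hj2⟩ | ⟨hj1, hj2⟩
        · exact ⟨j, j', hjj, hj1, hj2⟩
        · simp at hj1
      · rcases hj with ⟨hj1, hj2⟩ | ⟨hj1, hj2⟩ <;> simp at hj2
      · rcases hj with ⟨hj1, hj2⟩ | ⟨hj1, hj2⟩ <;> simp at hj1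
    obtain ⟨j2, j2', hj2, hs2, hp2⟩ :
        ∃ j j', j ≠ j' ∧ s = a j ∧ p2 = b j' := by
      rcases h2' with ⟨j, hj⟩ | ⟨j, hj⟩ | ⟨j, j', hjj, hj⟩ | ⟨j, j', hjj, hj⟩ | ⟨j, j', hjj, hj⟩
      · simp at hj
      · simp at hj
      · rcases hj with ⟨hj1, hj2⟩ | ⟨hj1, hj2⟩
        · exact ⟨j, j', hjj, hj1, hj2⟩
        · simp at hj1
      · rcases hj with ⟨hj1, hj2⟩ | ⟨hj1, hj2⟩ <;> simp at hj2
      · rcases hj with ⟨hj1, hj2⟩ | ⟨hj1, hj2⟩ <;> simp at hj1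
    have hjne : j1' ≠ j2' := fun h => hp (by rw [hp1, hp2, h])
    have hmem : (Sum.inl s(Sum.inr p1, Sum.inr p2) : VH n t m) ∈ tileVerts1 n t m i a b := by
      refine Or.inr (Or.inr (Or.inr (Or.inr ⟨j1', j2', hjne, ?_⟩)))
      rw [hp1, hp2]
    exact Finset.mem_coe.mp (hset ▸ hmem)
  · exfalso
    simp only [tile2, Finset.mem_insert, Finset.mem_singleton, Sum.inl.injEq,
      Sym2.eq_iff] at h1 h2
    rcases h1 with (⟨-, hy⟩ | ⟨hx, -⟩) | h1 | h1
    · rcases h2 with (⟨-, hy'⟩ | ⟨hx', -⟩) | h2 | h2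
      · exact hp ((Sum.inr.inj hy).trans (Sum.inr.inj hy').symm)
      · simp at hx'
      · simp at h2
      · simp at h2
    · simp at hx
    · simp at h1
    · simp at h1

/-- Key descent lemma: every conflict (whose tiles are tiles of `H`) contains a subset
which is an irreducible conflict. -/
lemma descent {n t m : ℕ} (tile : Finset (VH n t m) → Prop)
    (htile : ∀ T, tile T → IsTileH n t m T) :
    ∀ r : ℕ, ∀ (F : Finset (Finset (VH n t m))) (side : Bool) (P S : Finset (Fin n)),
      S.card ≤ r → 2 ≤ F.card → IsMatching n t m tile F →
      IsBadCopy n t m (matchColoredEdges n t m F) side P S →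
      (∀ T ∈ F, ∃ e ∈ copyEdges n side P S, ∃ c : Col n t m,
        (e, c) ∈ coloredEdges n t m T) →
      ∃ F' ⊆ F, IsIrredConflictWrt n t m tile F' := by
  intro r
  induction r using Nat.strong_induction_on with
  | _ r IH =>
  intro F side P S hSr hcard hM hbad hall
  by_cases hred : IsReducible n t m (matchColoredEdges n t m F) side P S
  · obtain ⟨m', hm', Sp, hne, hlt, hdisj, hunion, hbadu⟩ := hred
    classical
    set Fu : Fin m' → Finset (Finset (VH n t m)) := fun u =>
      F.filter (fun T => ∃ e ∈ copyEdges n side P (Sp u), ∃ c : Col n t m,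
        (e, c) ∈ coloredEdges n t m T) with hFu
    have hcover : ∀ e ∈ copyEdges n side P S, ∃ u, e ∈ copyEdges n side P (Sp u) := by
      intro e he
      cases side with
      | false =>
        simp only [copyEdges, if_neg, Bool.false_eq_true, not_false_iff,
          Finset.mem_product] at he ⊢
        rw [← hunion] at he
        obtain ⟨u, -, hu⟩ := Finset.mem_biUnion.mp he.1
        exact ⟨u, hu, he.2⟩
      | true =>
        simp only [copyEdges, if_pos, Finset.mem_product] at he ⊢
        rw [← hunion] at he
        obtain ⟨u, -, hu⟩ := Finset.mem_biUnion.mp he.2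
        exact ⟨u, he.1, hu⟩
    have htrans : ∀ u, ∀ ec : (Fin n × Fin n) × Col n t m,
        ec.1 ∈ copyEdges n side P (Sp u) →
        (ec ∈ matchColoredEdges n t m (Fu u) ↔ ec ∈ matchColoredEdges n t m F) := by
      intro u ec hec
      rw [mem_matchColoredEdges, mem_matchColoredEdges]
      constructor
      · rintro ⟨T, hT, hecT⟩
        exact ⟨T, Finset.mem_filter.mp hT |>.1, hecT⟩
      · rintro ⟨T, hT, hecT⟩
        exact ⟨T, Finset.mem_filter.mpr ⟨hT, ec.1, hec, ec.2, hecT⟩, hecT⟩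
    by_cases hbig : ∃ u, 2 ≤ (Fu u).card
    · obtain ⟨u, hu2⟩ := hbig
      have hsub : Fu u ⊆ F := Finset.filter_subset _ _
      have hM' : IsMatching n t m tile (Fu u) :=
        ⟨fun T hT => hM.1 T (hsub hT),
         fun T hT T' hT' h => hM.2 T (hsub hT) T' (hsub hT') h⟩
      have hbad' : IsBadCopy n t m (matchColoredEdges n t m (Fu u)) side P (Sp u) := by
        obtain ⟨hP2, hSne, hcov, heven⟩ := hbadu u
        refine ⟨hP2, hSne, fun e he => ?_, fun c => ?_⟩
        · obtain ⟨c, hc⟩ := hcov e he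
          exact ⟨c, (htrans u (e, c) he).mpr hc⟩
        · have hsetEq : {e : Fin n × Fin n | e ∈ copyEdges n side P (Sp u) ∧
              (e, c) ∈ matchColoredEdges n t m (Fu u)} =
              {e : Fin n × Fin n | e ∈ copyEdges n side P (Sp u) ∧
              (e, c) ∈ matchColoredEdges n t m F} := by
            ext e
            exact and_congr_right fun he => htrans u (e, c) he
          rw [hsetEq]
          exact heven c
      have hall' : ∀ T ∈ Fu u, ∃ e ∈ copyEdges n side P (Sp u), ∃ c : Col n t m,
          (e, c) ∈ coloredEdges n t m T := fun T hT => (Finset.mem_filter.mp hT).2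
      obtain ⟨F', hF'sub, hF'⟩ := IH (Sp u).card (lt_of_lt_of_le (hlt u) hSr)
        (Fu u) side P (Sp u) le_rfl hu2 hM' hbad' hall'
      exact ⟨F', hF'sub.trans hsub, hF'⟩
    · exfalso
      push_neg at hbig
      obtain ⟨p1, p2, hp, hP⟩ := Finset.card_eq_two.mp hbad.1
      obtain ⟨T, hT, T', hT', hTT'⟩ := Finset.one_lt_card.mp hcard
      have key : ∀ T'' ∈ F, (Sum.inl (if side then s(Sum.inl p1, Sum.inl p2)
          else s(Sum.inr p1, Sum.inr p2)) : VH n t m) ∈ T'' := by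
        intro T'' hT''
        obtain ⟨e, he, c, hec⟩ := hall T'' hT''
        obtain ⟨u, heu⟩ := hcover e he
        have hTmem : T'' ∈ Fu u := Finset.mem_filter.mpr ⟨hT'', e, heu, c, hec⟩
        have huniq : ∀ G ∈ Fu u, G = T'' := by
          intro G hG
          by_contra hGne
          exact absurd (Finset.one_lt_card.mpr ⟨G, hG, T'', hTmem, hGne⟩)
            (not_le.mpr (hbig u))
        obtain ⟨s, hs⟩ := hne u
        have hedge : ∀ p ∈ P, (Sum.inl (if side then s(Sum.inl p, Sum.inr s)
            else s(Sum.inl s, Sum.inr p)) : VH n t m) ∈ T'' := by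
          intro p hpP
          have he' : (if side then ((p, s) : Fin n × Fin n) else (s, p)) ∈
              copyEdges n side P (Sp u) := by
            cases side <;> simp [copyEdges, hpP, hs]
          obtain ⟨c', hc'⟩ := (hbadu u).2.2.1 _ he'
          obtain ⟨G, hG, hcg⟩ := mem_matchColoredEdges.mp hc'
          have hGu : G ∈ Fu u := Finset.mem_filter.mpr ⟨hG, _, he', c', hcg⟩
          have hGT := huniq G hGu
          subst hGT
          have hedgemem := hcg.1
          cases side <;> simpa using hedgemem
        have h1 := hedge p1 (by simp [hP])
        have h2 := hedge p2 (by simp [hP])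
        have htile'' : IsTileH n t m T'' := htile T'' (hM.1 T'' hT'')
        cases side with
        | false => simpa using pair_mem_false htile'' hp (by simpa using h1) (by simpa using h2)
        | true => simpa using pair_mem_true htile'' hp (by simpa using h1) (by simpa using h2)
      exact (Finset.disjoint_left.mp (hM.2 T hT T' hT' hTT') (key T hT)) (key T' hT')
  · exact ⟨F, subset_rfl, hcard, hM, side, P, S, hbad, hred, hall⟩

/-- In the auxiliary hypergraph `H = H₁ ∪ H₂` built from `K_{n,n}` (with `t ≥ 2` and
`N₂` of size `⌈n^δ⌉` for a fixed `δ ∈ (0,1)`), every conflict (with respect to `H₁` or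
with respect to `H`) contains a subset belonging to `𝒞 ∪ 𝒟`. -/
theorem stmt10 (t n : ℕ) (ht : 2 ≤ t) (hn : 1 ≤ n) (δ : ℝ) (hδ0 : 0 < δ) (hδ1 : δ < 1)
    (F : Finset (Finset (VH n t ⌈(n : ℝ) ^ δ⌉₊)))
    (hF : IsConflictWrt n t ⌈(n : ℝ) ^ δ⌉₊ (IsTile1 n t ⌈(n : ℝ) ^ δ⌉₊) F ∨
          IsConflictWrt n t ⌈(n : ℝ) ^ δ⌉₊ (IsTileH n t ⌈(n : ℝ) ^ δ⌉₊) F) :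
    ∃ F' : Finset (Finset (VH n t ⌈(n : ℝ) ^ δ⌉₊)), F' ⊆ F ∧
      F' ∈ minIrredConflicts1 n t ⌈(n : ℝ) ^ δ⌉₊ ∪
            minIrredConflictsH n t ⌈(n : ℝ) ^ δ⌉₊ := by
  classical
  generalize hm : ⌈(n : ℝ) ^ δ⌉₊ = m at F hF ⊢
  rcases hF with h | h
  · obtain ⟨hcard, hM, side, P, S, hbad, hall⟩ := h
    obtain ⟨F'', hsub, hirr⟩ := descent (IsTile1 n t m) (fun T hT => Or.inl hT)
      S.card F side P S le_rfl hcard hM hbad hall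
    obtain ⟨F', hsub', hP, hmin⟩ :=
      exists_min_subset (IsIrredConflictWrt n t m (IsTile1 n t m)) F'' hirr
    exact ⟨F', hsub'.trans hsub, Or.inl ⟨hP, fun C' hC' => hmin C' hC'⟩⟩
  · obtain ⟨hcard, hM, side, P, S, hbad, hall⟩ := h
    obtain ⟨F'', hsub, hirr⟩ := descent (IsTileH n t m) (fun T hT => hT)
      S.card F side P S le_rfl hcard hM hbad hall
    obtain ⟨F', hsub', hP, hmin⟩ :=
      exists_min_subset (IsIrredConflictWrt n t m (IsTileH n t m)) F'' hirr
    exact ⟨F', hsub'.trans hsub, Or.inr ⟨hP, fun C' hC' => hmin C' hC'⟩⟩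
end

section
/- In the auxiliary hypergraph H = H1 ∪ H2 built from K_{n,n} (with t ≥ 2), if M is a matching in H that contains no member of 𝒞 ∪ 𝒟 as a subset, then in the partial edge-coloring of K_{n,n} corresponding to M, every copy of K_{2,t} all of whose edges are colored has a color appearing on an odd number of its edges (i.e., there is no bad copy of K_{2,t}). -/
open Finset

section Aux
open Classical in
/-- extract an inclusion-minimal subset satisfying `p`. -/
lemma exists_minimal_subset {α : Type*} [DecidableEq α] (p : Finset α → Prop)
    (F : Finset α) (hF : p F) :
    ∃ C, C ⊆ F ∧ p C ∧ ∀ C' ⊂ C, ¬ p C' := by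
  induction F using Finset.strongInduction with
  | _ F ih =>
    by_cases h : ∀ C' ⊂ F, ¬ p C'
    · exact ⟨F, subset_rfl, hF, h⟩
    · push_neg at h
      obtain ⟨C', hsub, hp⟩ := h
      obtain ⟨C, hC1, hC2, hC3⟩ := ih C' hsub hp
      exact ⟨C, hC1.trans hsub.subset, hC2, hC3⟩

lemma copyEdges_mono (n : ℕ) (side : Bool) (P : Finset (Fin n)) {S S' : Finset (Fin n)}
    (h : S' ⊆ S) : copyEdges n side P S' ⊆ copyEdges n side P S := by
  cases side <;> simp only [copyEdges, if_true, if_false, Bool.false_eq_true] <;>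
    exact Finset.product_subset_product (by first | exact h | exact subset_rfl)
      (by first | exact h | exact subset_rfl)

lemma badCopy_congr (n t m : ℕ) (F1 F2 : Set ((Fin n × Fin n) × Col n t m)) (side : Bool)
    (P S : Finset (Fin n))
    (h : ∀ e ∈ copyEdges n side P S, ∀ c, ((e, c) ∈ F1 ↔ (e, c) ∈ F2)) :
    IsBadCopy n t m F1 side P S ↔ IsBadCopy n t m F2 side P S := by
  unfold IsBadCopy
  have hset : ∀ c : Col n t m,
      {e : Fin n × Fin n | e ∈ copyEdges n side P S ∧ (e, c) ∈ F1} =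
      {e : Fin n × Fin n | e ∈ copyEdges n side P S ∧ (e, c) ∈ F2} := by
    intro c; ext e; simp only [Set.mem_setOf_eq]
    exact and_congr_right fun he => h e he c
  constructor <;> rintro ⟨h1, h2, h3, h4⟩ <;> refine ⟨h1, h2, ?_, ?_⟩
  · intro e he; obtain ⟨c, hc⟩ := h3 e he; exact ⟨c, (h e he c).1 hc⟩
  · intro c; rw [← hset c]; exact h4 c
  · intro e he; obtain ⟨c, hc⟩ := h3 e he; exact ⟨c, (h e he c).2 hc⟩
  · intro c; rw [hset c]; exact h4 c

lemma reducible_congr (n t m : ℕ) (F1 F2 : Set ((Fin n × Fin n) × Col n t m)) (side : Bool)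
    (P S : Finset (Fin n))
    (h : ∀ e ∈ copyEdges n side P S, ∀ c, ((e, c) ∈ F1 ↔ (e, c) ∈ F2)) :
    IsReducible n t m F1 side P S ↔ IsReducible n t m F2 side P S := by
  unfold IsReducible
  refine exists_congr fun m' => and_congr_right fun _ => exists_congr fun Sp =>
    and_congr_right fun _ => and_congr_right fun _ => and_congr_right fun _ =>
    and_congr_right fun hun => forall_congr' fun u => ?_
  have hsub : Sp u ⊆ S := hun ▸ Finset.subset_biUnion_of_mem Sp (Finset.mem_univ u)
  exact badCopy_congr n t m F1 F2 side P (Sp u)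
    fun e he c => h e (copyEdges_mono n side P hsub he) c

lemma exists_irred_part (n t m : ℕ) (F : Set ((Fin n × Fin n) × Col n t m)) (side : Bool)
    (P : Finset (Fin n)) :
    ∀ (S : Finset (Fin n)), IsBadCopy n t m F side P S → ∀ s ∈ S,
      ∃ S', S' ⊆ S ∧ s ∈ S' ∧ IsBadCopy n t m F side P S' ∧
        ¬ IsReducible n t m F side P S' := by
  intro S
  induction S using Finset.strongInduction with
  | _ S ih =>
    intro hbad s hs
    by_cases hred : IsReducible n t m F side P S
    · obtain ⟨m', hm', Sp, hne, hlt, hdisj, hun, hb⟩ := hred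
      have hsmem : s ∈ Finset.univ.biUnion Sp := hun ▸ hs
      obtain ⟨u, -, hu⟩ := Finset.mem_biUnion.mp hsmem
      have hsub : Sp u ⊆ S := hun ▸ Finset.subset_biUnion_of_mem Sp (Finset.mem_univ u)
      have hss : Sp u ⊂ S := hsub.ssubset_of_ne
        (fun h => absurd (h ▸ rfl) (Nat.ne_of_lt (hlt u) ∘ congrArg Finset.card))
      obtain ⟨S', h1, h2, h3, h4⟩ := ih (Sp u) hss (hb u) s hu
      exact ⟨S', h1.trans hsub, h2, h3, h4⟩
    · exact ⟨S, subset_rfl, hs, hbad, hred⟩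

lemma mem_tileVerts1_edge {n t m : ℕ} {i : Col1 n t} {a b : Fin (t + 1) → Fin n}
    {x y : Fin n}
    (h : (Sum.inl s(Sum.inl x, Sum.inr y) : VH n t m) ∈ tileVerts1 n t m i a b) :
    ∃ j j', j ≠ j' ∧ x = a j ∧ y = b j' := by
  simp only [tileVerts1, Set.mem_setOf_eq, Sum.inl.injEq, Sym2.eq_iff, Sum.inr.injEq,
    reduceCtorEq, and_false, false_and, or_false, false_or, or_self, exists_false,
    and_self] at h
  rcases h with ⟨j, j', hne, hx, hy⟩
  exact ⟨j, j', hne, hx, hy⟩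

end Aux

lemma two_edges {n : ℕ} (side : Bool) {P S : Finset (Fin n)} (hP : P.card = 2)
    (hS : S.Nonempty) :
    ∃ e1 e2, e1 ∈ copyEdges n side P S ∧ e2 ∈ copyEdges n side P S ∧ e1 ≠ e2 := by
  obtain ⟨p1, p2, hp, hPeq⟩ := Finset.card_eq_two.mp hP
  obtain ⟨s0, hs0⟩ := hS
  have hp1 : p1 ∈ P := hPeq ▸ Finset.mem_insert_self _ _
  have hp2 : p2 ∈ P := hPeq ▸ Finset.mem_insert_of_mem (Finset.mem_singleton_self _)
  cases side
  · exact ⟨(s0, p1), (s0, p2),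
      by simp [copyEdges, Finset.mem_product, hs0, hp1],
      by simp [copyEdges, Finset.mem_product, hs0, hp2],
      fun h => hp (congrArg Prod.snd h)⟩
  · exact ⟨(p1, s0), (p2, s0),
      by simp [copyEdges, Finset.mem_product, hp1, hs0],
      by simp [copyEdges, Finset.mem_product, hp2, hs0],
      fun h => hp (congrArg Prod.fst h)⟩

lemma single_tile (n t m : ℕ) (M : Finset (Finset (VH n t m)))
    (hM : IsMatching n t m (IsTileH n t m) M)
    (hfree : ∀ C ∈ minIrredConflicts1 n t m ∪ minIrredConflictsH n t m, ¬ C ⊆ M)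
    (side : Bool) (P S' : Finset (Fin n))
    (hbad : IsBadCopy n t m (matchColoredEdges n t m M) side P S')
    (hirr : ¬ IsReducible n t m (matchColoredEdges n t m M) side P S') :
    ∃ T ∈ M, IsTile1 n t m T ∧
      ∀ e ∈ copyEdges n side P S',
        (Sum.inl s(Sum.inl e.1, Sum.inr e.2) : VH n t m) ∈ T := by
  classical
  set F' := M.filter
    (fun T => ∃ e ∈ copyEdges n side P S', ∃ c, (e, c) ∈ coloredEdges n t m T) with hF'
  have hsub : F' ⊆ M := Finset.filter_subset _ _
  have hagree : ∀ e ∈ copyEdges n side P S', ∀ c,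
      ((e, c) ∈ matchColoredEdges n t m M ↔ (e, c) ∈ matchColoredEdges n t m F') := by
    intro e he c
    simp only [matchColoredEdges, Set.mem_iUnion, exists_prop]
    constructor
    · rintro ⟨T, hT, hc⟩
      exact ⟨T, Finset.mem_filter.mpr ⟨hT, e, he, c, hc⟩, hc⟩
    · rintro ⟨T, hT, hc⟩; exact ⟨T, hsub hT, hc⟩
  have hcov : ∀ e ∈ copyEdges n side P S', ∃ T ∈ F', ∃ c, (e, c) ∈ coloredEdges n t m T := by
    intro e he
    obtain ⟨c, hc⟩ := hbad.2.2.1 e he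
    simp only [matchColoredEdges, Set.mem_iUnion, exists_prop] at hc
    obtain ⟨T, hT, hc⟩ := hc
    exact ⟨T, Finset.mem_filter.mpr ⟨hT, e, he, c, hc⟩, c, hc⟩
  obtain ⟨e1, e2, he1, he2, hne12⟩ := two_edges side hbad.1 hbad.2.1
  obtain ⟨T1, hT1, c1, hc1⟩ := hcov e1 he1
  have hconf : ¬ 2 ≤ F'.card := by
    intro h2
    have hbad' : IsBadCopy n t m (matchColoredEdges n t m F') side P S' :=
      (badCopy_congr n t m _ _ side P S' hagree).mp hbad
    have hirr' : ¬ IsReducible n t m (matchColoredEdges n t m F') side P S' :=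
      fun h => hirr ((reducible_congr n t m _ _ side P S' hagree).mpr h)
    have hic : IsIrredConflictWrt n t m (IsTileH n t m) F' :=
      ⟨h2, ⟨fun T hT => hM.1 T (hsub hT),
        fun T hT T' hT' => hM.2 T (hsub hT) T' (hsub hT')⟩,
        side, P, S', hbad', hirr',
        fun T hT => (Finset.mem_filter.mp hT).2⟩
    obtain ⟨C, hCsub, hCp, hCmin⟩ := exists_minimal_subset _ F' hic
    exact hfree C (Or.inr ⟨hCp, hCmin⟩) (hCsub.trans hsub)
  have hcard : F'.card = 1 := by
    have h1 : 1 ≤ F'.card := Finset.card_pos.mpr ⟨T1, hT1⟩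
    omega
  obtain ⟨T, hTeq⟩ := Finset.card_eq_one.mp hcard
  have hTF' : T ∈ F' := hTeq ▸ Finset.mem_singleton_self T
  have hTM : T ∈ M := hsub hTF'
  have hedge : ∀ e ∈ copyEdges n side P S',
      (Sum.inl s(Sum.inl e.1, Sum.inr e.2) : VH n t m) ∈ T := by
    intro e he
    obtain ⟨T', hT', c, hc⟩ := hcov e he
    have : T' = T := by rw [hTeq] at hT'; exact Finset.mem_singleton.mp hT'
    subst this
    exact hc.1
  refine ⟨T, hTM, ?_, hedge⟩
  rcases hM.1 T hTM with h1 | h2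
  · exact h1
  · exfalso
    obtain ⟨x, y, i0, rfl⟩ := h2
    have key : ∀ e ∈ copyEdges n side P S', e = (x, y) := by
      intro e he
      have := hedge e he
      simp only [tile2, Finset.mem_insert, Finset.mem_singleton, Sum.inl.injEq,
        Sym2.eq_iff, Sum.inr.injEq, reduceCtorEq, and_false, false_and, or_false,
        false_or, or_self] at this
      exact Prod.ext this.1 this.2
    exact hne12 ((key e1 he1).trans (key e2 he2).symm)

lemma card_bound {t n : ℕ} (g : Fin (t + 1) → Fin n) (hg : Function.Injective g)
    {j1 j2 : Fin (t + 1)} (hj : j1 ≠ j2) {S : Finset (Fin n)}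
    (h : ∀ s ∈ S, ∃ j', j' ≠ j1 ∧ j' ≠ j2 ∧ s = g j') : S.card ≤ t - 1 := by
  have hsub : S ⊆ ((Finset.univ.erase j1).erase j2).image g := by
    intro s hs
    obtain ⟨j', h1, h2, rfl⟩ := h s hs
    exact Finset.mem_image_of_mem g
      (Finset.mem_erase.mpr ⟨h2, Finset.mem_erase.mpr ⟨h1, Finset.mem_univ _⟩⟩)
  calc S.card ≤ _ := Finset.card_le_card hsub
    _ = ((Finset.univ.erase j1).erase j2).card := Finset.card_image_of_injective _ hg
    _ = t - 1 := by
        rw [Finset.card_erase_of_mem (Finset.mem_erase.mpr ⟨hj.symm, Finset.mem_univ _⟩),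
          Finset.card_erase_of_mem (Finset.mem_univ _), Finset.card_univ, Fintype.card_fin]
        omega

theorem stmt11_aux (t n m : ℕ) (ht : 2 ≤ t)
    (M : Finset (Finset (VH n t m)))
    (hM : IsMatching n t m (IsTileH n t m) M)
    (hfree : ∀ C ∈ minIrredConflicts1 n t m ∪
        minIrredConflictsH n t m, ¬ C ⊆ M) :
    ∀ (side : Bool) (P S : Finset (Fin n)), S.card = t →
      ¬ IsBadCopy n t m (matchColoredEdges n t m M)
        side P S := by
  classical
  intro side P S hScard hbad
  have hpart := fun s hs => exists_irred_part n t m _ side P S hbad s hs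
  choose S' hsubS hmem hbad' hirr' using hpart
  have htile := fun s (hs : s ∈ S) =>
    single_tile n t m M hM hfree side P (S' s hs) (hbad' s hs) (hirr' s hs)
  choose T hTM htile1 hedge using htile
  obtain ⟨p1, p2, hp12, hPeq⟩ := Finset.card_eq_two.mp hbad.1
  have hp1 : p1 ∈ P := hPeq ▸ Finset.mem_insert_self _ _
  have hp2 : p2 ∈ P := hPeq ▸ Finset.mem_insert_of_mem (Finset.mem_singleton_self _)
  have hSpos : 0 < S.card := by omega
  obtain ⟨s0, hs0⟩ := Finset.card_pos.mp hSpos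
  cases side with
  | true =>
    have hmemE : ∀ (p : Fin n), p ∈ P → ∀ (s : Fin n) (hs : s ∈ S),
        (p, s) ∈ copyEdges n true P (S' s hs) := by
      intro p hp s hs
      simp [copyEdges, Finset.mem_product, hp, hmem s hs]
    have hq : ∀ (s : Fin n) (hs : s ∈ S),
        (Sum.inl s(Sum.inl p1, Sum.inl p2) : VH n t m) ∈ T s hs := by
      intro s hs
      obtain ⟨i, a, b, ha, hb, hTset⟩ := htile1 s hs
      have h1 := hedge s hs (p1, s) (hmemE p1 hp1 s hs)
      have h2 := hedge s hs (p2, s) (hmemE p2 hp2 s hs)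
      rw [← Finset.mem_coe, hTset] at h1 h2
      obtain ⟨j1, j1', hne1, hx1, hy1⟩ := mem_tileVerts1_edge h1
      obtain ⟨j2, j2', hne2, hx2, hy2⟩ := mem_tileVerts1_edge h2
      replace hx1 : p1 = a j1 := hx1
      replace hy1 : s = b j1' := hy1
      replace hx2 : p2 = a j2 := hx2
      replace hy2 : s = b j2' := hy2
      have hj : j1 ≠ j2 := fun h => hp12 (by rw [hx1, hx2, h])
      rw [← Finset.mem_coe, hTset]
      exact Or.inr (Or.inr (Or.inr (Or.inl ⟨j1, j2, hj, by rw [hx1, hx2]⟩)))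
    have hTall : ∀ (s : Fin n) (hs : s ∈ S), T s hs = T s0 hs0 := by
      intro s hs
      by_contra hne
      exact (Finset.disjoint_left.mp (hM.2 _ (hTM s hs) _ (hTM s0 hs0) hne)
        (hq s hs)) (hq s0 hs0)
    obtain ⟨i, a, b, ha, hb, hTset⟩ := htile1 s0 hs0
    have h1 := hedge s0 hs0 (p1, s0) (hmemE p1 hp1 s0 hs0)
    have h2 := hedge s0 hs0 (p2, s0) (hmemE p2 hp2 s0 hs0)
    rw [← Finset.mem_coe, hTset] at h1 h2
    obtain ⟨j1, j1', hne1, hx1, hy1⟩ := mem_tileVerts1_edge h1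
    obtain ⟨j2, j2', hne2, hx2, hy2⟩ := mem_tileVerts1_edge h2
    replace hx1 : p1 = a j1 := hx1
    replace hy1 : s0 = b j1' := hy1
    replace hx2 : p2 = a j2 := hx2
    replace hy2 : s0 = b j2' := hy2
    have hj12 : j1 ≠ j2 := fun h => hp12 (by rw [hx1, hx2, h])
    have hall : ∀ s ∈ S, ∃ j', j' ≠ j1 ∧ j' ≠ j2 ∧ s = b j' := by
      intro s hs
      have e1 := hedge s hs (p1, s) (hmemE p1 hp1 s hs)
      have e2 := hedge s hs (p2, s) (hmemE p2 hp2 s hs)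
      rw [hTall s hs, ← Finset.mem_coe, hTset] at e1 e2
      obtain ⟨k1, k1', hk1, hxk1, hyk1⟩ := mem_tileVerts1_edge e1
      obtain ⟨k2, k2', hk2, hxk2, hyk2⟩ := mem_tileVerts1_edge e2
      replace hxk1 : p1 = a k1 := hxk1
      replace hyk1 : s = b k1' := hyk1
      replace hxk2 : p2 = a k2 := hxk2
      replace hyk2 : s = b k2' := hyk2
      have hk1j : k1 = j1 := ha (hxk1.symm.trans hx1)
      have hk2j : k2 = j2 := ha (hxk2.symm.trans hx2)
      have hkk : k1' = k2' := hb (hyk1.symm.trans hyk2)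
      refine ⟨k1', ?_, ?_, hyk1⟩
      · exact fun h => hk1 (hk1j.trans h.symm)
      · exact fun h => hk2 (hk2j.trans (h ▸ hkk.symm).symm)
    have := card_bound b hb hj12 hall
    omega
  | false =>
    have hmemE : ∀ (p : Fin n), p ∈ P → ∀ (s : Fin n) (hs : s ∈ S),
        (s, p) ∈ copyEdges n false P (S' s hs) := by
      intro p hp s hs
      simp [copyEdges, Finset.mem_product, hp, hmem s hs]
    have hq : ∀ (s : Fin n) (hs : s ∈ S),
        (Sum.inl s(Sum.inr p1, Sum.inr p2) : VH n t m) ∈ T s hs := by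
      intro s hs
      obtain ⟨i, a, b, ha, hb, hTset⟩ := htile1 s hs
      have h1 := hedge s hs (s, p1) (hmemE p1 hp1 s hs)
      have h2 := hedge s hs (s, p2) (hmemE p2 hp2 s hs)
      rw [← Finset.mem_coe, hTset] at h1 h2
      obtain ⟨j1, j1', hne1, hx1, hy1⟩ := mem_tileVerts1_edge h1
      obtain ⟨j2, j2', hne2, hx2, hy2⟩ := mem_tileVerts1_edge h2
      replace hx1 : s = a j1 := hx1
      replace hy1 : p1 = b j1' := hy1
      replace hx2 : s = a j2 := hx2
      replace hy2 : p2 = b j2' := hy2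
      have hj : j1' ≠ j2' := fun h => hp12 (by rw [hy1, hy2, h])
      rw [← Finset.mem_coe, hTset]
      exact Or.inr (Or.inr (Or.inr (Or.inr ⟨j1', j2', hj, by rw [hy1, hy2]⟩)))
    have hTall : ∀ (s : Fin n) (hs : s ∈ S), T s hs = T s0 hs0 := by
      intro s hs
      by_contra hne
      exact (Finset.disjoint_left.mp (hM.2 _ (hTM s hs) _ (hTM s0 hs0) hne)
        (hq s hs)) (hq s0 hs0)
    obtain ⟨i, a, b, ha, hb, hTset⟩ := htile1 s0 hs0
    have h1 := hedge s0 hs0 (s0, p1) (hmemE p1 hp1 s0 hs0)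
    have h2 := hedge s0 hs0 (s0, p2) (hmemE p2 hp2 s0 hs0)
    rw [← Finset.mem_coe, hTset] at h1 h2
    obtain ⟨j1, j1', hne1, hx1, hy1⟩ := mem_tileVerts1_edge h1
    obtain ⟨j2, j2', hne2, hx2, hy2⟩ := mem_tileVerts1_edge h2
    replace hx1 : s0 = a j1 := hx1
    replace hy1 : p1 = b j1' := hy1
    replace hx2 : s0 = a j2 := hx2
    replace hy2 : p2 = b j2' := hy2
    have hj12 : j1' ≠ j2' := fun h => hp12 (by rw [hy1, hy2, h])
    have hall : ∀ s ∈ S, ∃ j, j ≠ j1' ∧ j ≠ j2' ∧ s = a j := by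
      intro s hs
      have e1 := hedge s hs (s, p1) (hmemE p1 hp1 s hs)
      have e2 := hedge s hs (s, p2) (hmemE p2 hp2 s hs)
      rw [hTall s hs, ← Finset.mem_coe, hTset] at e1 e2
      obtain ⟨k1, k1', hk1, hxk1, hyk1⟩ := mem_tileVerts1_edge e1
      obtain ⟨k2, k2', hk2, hxk2, hyk2⟩ := mem_tileVerts1_edge e2
      replace hxk1 : s = a k1 := hxk1
      replace hyk1 : p1 = b k1' := hyk1
      replace hxk2 : s = a k2 := hxk2
      replace hyk2 : p2 = b k2' := hyk2
      have hk1j : k1' = j1' := hb (hyk1.symm.trans hy1)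
      have hk2j : k2' = j2' := hb (hyk2.symm.trans hy2)
      have hkk : k1 = k2 := ha (hxk1.symm.trans hxk2)
      refine ⟨k1, ?_, ?_, hxk1⟩
      · exact fun h => hk1 (h.trans hk1j.symm)
      · exact fun h => hk2 ((hkk.symm.trans h).trans hk2j.symm)
    have := card_bound a ha hj12 hall
    omega

/-- In the auxiliary hypergraph `H = H₁ ∪ H₂` built from `K_{n,n}` (with `t ≥ 2` and
`N₂` of size `⌈n^δ⌉` for a fixed `δ ∈ (0,1)`), if `M` is a matching in `H` containing no
member of `𝒞 ∪ 𝒟` as a subset, then in the partial edge-coloring of `K_{n,n}`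
corresponding to `M` there is no bad copy of `K_{2,t}` all of whose edges are colored. -/
theorem stmt11 (t n : ℕ) (ht : 2 ≤ t) (hn : 1 ≤ n) (δ : ℝ) (hδ0 : 0 < δ) (hδ1 : δ < 1)
    (M : Finset (Finset (VH n t ⌈(n : ℝ) ^ δ⌉₊)))
    (hM : IsMatching n t ⌈(n : ℝ) ^ δ⌉₊ (IsTileH n t ⌈(n : ℝ) ^ δ⌉₊) M)
    (hfree : ∀ C ∈ minIrredConflicts1 n t ⌈(n : ℝ) ^ δ⌉₊ ∪
        minIrredConflictsH n t ⌈(n : ℝ) ^ δ⌉₊, ¬ C ⊆ M) :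
    ∀ (side : Bool) (P S : Finset (Fin n)), S.card = t →
      ¬ IsBadCopy n t ⌈(n : ℝ) ^ δ⌉₊ (matchColoredEdges n t ⌈(n : ℝ) ^ δ⌉₊ M)
        side P S :=
  stmt11_aux t n ⌈(n : ℝ) ^ δ⌉₊ ht M hM hfree
end
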